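/- Let θ be an antimorphic involution. If u is a palindrome but not a θ-palindrome, then the word w = uuθ(u) has at least two distinct palindromes among its θ-conjugates, namely uuu and uθ(u)u. -/
import Mathlib


variable {α : Type*}

/-- θ is an antimorphic involution on Σ* : θ(uv) = θ(v)θ(u) and θ² = id. -/
def IsAntimorphicInvolution (θ : List α → List α) : Prop :=
  (∀ u v : List α, θ (u ++ v) = θ v ++ θ u) ∧ ∀ u : List α, θ (θ u) = u

/-- The set of θ-conjugates of w: C_θ(w) = { θ(v) ++ u : w = u ++ v }. -/
def thetaConjugates (θ : List α → List α) (w : List α) : Set (List α) :=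
  {x | ∃ u v : List α, w = u ++ v ∧ x = θ v ++ u}

/-- n-fold concatenation power of a word. -/
def listPow (z : List α) (n : ℕ) : List α := (List.replicate n z).flatten

/-- A word is primitive if it is not a proper power. -/
def Primitive (z : List α) : Prop :=
  z ≠ [] ∧ ∀ (t : List α) (k : ℕ), z = listPow t k → k = 1

/-- The conjugacy class of w: { v ++ u : w = u ++ v }. -/
def conjClass (w : List α) : Set (List α) := {x | ∃ u v : List α, w = u ++ v ∧ x = v ++ u}

section Aux

variable {θ : List α → List α}

lemma theta_nil (hθ : IsAntimorphicInvolution θ) : θ [] = [] := by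
  have h := hθ.1 [] []
  simp only [List.append_nil] at h
  have hlen := congrArg List.length h
  simp only [List.length_append] at hlen
  exact List.eq_nil_of_length_eq_zero (by omega)

lemma theta_ne_nil (hθ : IsAntimorphicInvolution θ) {w : List α} (hw : w ≠ []) :
    θ w ≠ [] := by
  intro h
  apply hw
  have := hθ.2 w
  rw [h, theta_nil hθ] at this
  exact this.symm

lemma theta_singleton (hθ : IsAntimorphicInvolution θ) (a : α) :
    ∃ b : α, θ [a] = [b] := by
  rcases h : θ [a] with _ | ⟨b, t⟩
  · exact absurd h (theta_ne_nil hθ (by simp))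
  · have h2 : θ (b :: t) = [a] := by rw [← h, hθ.2]
    have h3 : θ ([b] ++ t) = [a] := by simpa using h2
    rw [hθ.1] at h3
    rcases t with _ | ⟨c, s⟩
    · exact ⟨b, rfl⟩
    · exfalso
      have hb := theta_ne_nil hθ (w := [b]) (by simp)
      have ht := theta_ne_nil hθ (w := c :: s) (by simp)
      have hlen : (θ (c :: s)).length + (θ [b]).length = 1 := by
        have := congrArg List.length h3
        simpa using this
      have h1 : 1 ≤ (θ (c :: s)).length := List.length_pos_iff.mpr ht
      have h2' : 1 ≤ (θ [b]).length := List.length_pos_iff.mpr hb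
      omega

lemma theta_reverse (hθ : IsAntimorphicInvolution θ) (w : List α) :
    (θ w).reverse = θ w.reverse := by
  induction w with
  | nil => simp [theta_nil hθ]
  | cons a t ih =>
    have h1 : θ (a :: t) = θ t ++ θ [a] := by
      have := hθ.1 [a] t; simpa using this
    obtain ⟨b, hb⟩ := theta_singleton hθ a
    rw [h1, List.reverse_append, ih, hb]
    show [b].reverse ++ θ t.reverse = θ (a :: t).reverse
    simp only [List.reverse_cons, List.reverse_nil, List.nil_append]
    rw [hθ.1, hb]

end Aux

theorem stmt17 (θ : List α → List α) (hθ : IsAntimorphicInvolution θ)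
    (u : List α) (hpal : u.reverse = u) (hnθ : θ u ≠ u) :
    u ++ u ++ u ∈ thetaConjugates θ (u ++ u ++ θ u) ∧
    u ++ θ u ++ u ∈ thetaConjugates θ (u ++ u ++ θ u) ∧
    (u ++ u ++ u).reverse = u ++ u ++ u ∧
    (u ++ θ u ++ u).reverse = u ++ θ u ++ u ∧
    u ++ u ++ u ≠ u ++ θ u ++ u := by
  obtain ⟨hanti, hinv⟩ := hθ
  have hrevθ : (θ u).reverse = θ u := by
    rw [theta_reverse ⟨hanti, hinv⟩, hpal]
  refine ⟨⟨u ++ u, θ u, rfl, by simp [hinv]⟩,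
    ⟨u, u ++ θ u, by simp, by simp [hanti, hinv]⟩,
    by simp [hpal], by simp [hpal, hrevθ], ?_⟩
  intro h
  apply hnθ
  rw [List.append_assoc, List.append_assoc] at h
  have h2 := List.append_cancel_left h
  exact (List.append_cancel_right h2).symm
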